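/- Let G be a finite σ-soluble group that is not σ-nilpotent but all of whose proper subgroups are σ-nilpotent. Then G is a Schmidt group with |σ(G)| = |π(G)|. -/

import Mathlib

open Pointwise

section SigmaDefs

variable {ι : Type*}

/-- `σ` is a partition of the set of all primes into pairwise disjoint nonempty sets. -/
def IsPrimePartition (σ : ι → Set ℕ) : Prop :=
  (∀ i, ∀ p ∈ σ i, Nat.Prime p) ∧ (∀ i, (σ i).Nonempty) ∧
    (∀ i j, i ≠ j → Disjoint (σ i) (σ j)) ∧
    (∀ p : ℕ, Nat.Prime p → ∃ i, p ∈ σ i)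

/-- All primes dividing `n` lie in a single class `σ i`. -/
def IsSigmaPrimaryNat (σ : ι → Set ℕ) (n : ℕ) : Prop :=
  ∃ i, ∀ p : ℕ, Nat.Prime p → p ∣ n → p ∈ σ i

/-- A group is `σ`-primary if all primes dividing its order lie in a single class of `σ`. -/
def IsSigmaPrimary (σ : ι → Set ℕ) (G : Type*) [Group G] : Prop :=
  IsSigmaPrimaryNat σ (Nat.card G)

/-- A group is `σ`-nilpotent if it is the (internal) direct product of finitely many
normal `σ`-primary subgroups. -/
def SigmaNilpotent (σ : ι → Set ℕ) (G : Type*) [Group G] : Prop :=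
  ∃ (k : ℕ) (N : Fin k → Subgroup G),
    (∀ t, (N t).Normal) ∧ (∀ t, IsSigmaPrimary σ ↥(N t)) ∧
      (∀ t, Disjoint (N t) (⨆ s, ⨆ _ : s ≠ t, N s)) ∧ (⨆ t, N t) = ⊤

/-- `H/K` is a chief factor of `G`: both are normal in `G`, `K < H`, and no normal
subgroup of `G` lies strictly between them. -/
def IsChiefFactor (G : Type*) [Group G] (K H : Subgroup G) : Prop :=
  K.Normal ∧ H.Normal ∧ K < H ∧
    ∀ L : Subgroup G, L.Normal → K ≤ L → L ≤ H → L = K ∨ L = H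

/-- A group is `σ`-soluble if every chief factor is `σ`-primary
(the order of the factor `H/K` is `K.relindex H`). -/
def SigmaSoluble (σ : ι → Set ℕ) (G : Type*) [Group G] : Prop :=
  ∀ K H : Subgroup G, IsChiefFactor G K H → IsSigmaPrimaryNat σ (K.relIndex H)

/-- `A` is `σ`-subnormal in `G`: there is a chain `A = A₀ ≤ A₁ ≤ ⋯ ≤ A_t = G` such that
each `A_{j}` is normal in `A_{j+1}` or `A_{j+1}/(A_j)_{A_{j+1}}` is `σ`-primary. -/
def SigmaSubnormal (σ : ι → Set ℕ) {G : Type*} [Group G] (A : Subgroup G) : Prop :=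
  ∃ (t : ℕ) (f : Fin (t + 1) → Subgroup G),
    f 0 = A ∧ f (Fin.last t) = ⊤ ∧
      ∀ j : Fin t, f j.castSucc ≤ f j.succ ∧
        (((f j.castSucc).subgroupOf (f j.succ)).Normal ∨
          IsSigmaPrimaryNat σ (((f j.castSucc).subgroupOf (f j.succ)).normalCore.index))

/-- `M` is a maximal subgroup of `K` (inside the ambient group `G`). -/
def MaximalIn {G : Type*} [Group G] (M K : Subgroup G) : Prop :=
  M < K ∧ ∀ L : Subgroup G, M < L → L ≤ K → L = K

/-- `H` is an `n`-maximal subgroup of `G`: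
there is a chain `H = M_n < ⋯ < M_1 < M_0 = G` with each term maximal in the previous one. -/
def IsNMaximal {G : Type*} [Group G] : ℕ → Subgroup G → Prop
  | 0, H => H = ⊤
  | n + 1, H => ∃ K : Subgroup G, IsNMaximal n K ∧ MaximalIn H K

/-- `m_σ(G) = n`: every `n`-maximal subgroup of `G` is `σ`-subnormal in `G`, but
(when `n > 1`) some `(n-1)`-maximal subgroup is not `σ`-subnormal in `G`. -/
def mSigmaEq (σ : ι → Set ℕ) (G : Type*) [Group G] (n : ℕ) : Prop :=
  (∀ H : Subgroup G, IsNMaximal n H → SigmaSubnormal σ H) ∧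
    (1 < n → ∃ H : Subgroup G, IsNMaximal (n - 1) H ∧ ¬ SigmaSubnormal σ H)

/-- `H` is a Hall `σ i`-subgroup of `G`. -/
def IsHallSigmaSubgroup (σ : ι → Set ℕ) (i : ι) {G : Type*} [Group G] (H : Subgroup G) : Prop :=
  (∀ p : ℕ, Nat.Prime p → p ∣ Nat.card ↥H → p ∈ σ i) ∧
    (∀ p : ℕ, Nat.Prime p → p ∣ H.index → p ∉ σ i)

/-- A complete Hall `σ`-set of `G`: every nontrivial member is a Hall `σ i`-subgroup of `G`
for some `i`, and for every class `σ i` meeting `π(G)` the set contains exactly one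
Hall `σ i`-subgroup of `G`. -/
def IsCompleteHallSigmaSet (σ : ι → Set ℕ) {G : Type*} [Group G] (𝓗 : Set (Subgroup G)) : Prop :=
  (∀ H ∈ 𝓗, H ≠ ⊥ → ∃ i, IsHallSigmaSubgroup σ i H) ∧
    (∀ i : ι, (σ i ∩ {p : ℕ | Nat.Prime p ∧ p ∣ Nat.card G}).Nonempty →
      ∃! H : Subgroup G, H ∈ 𝓗 ∧ IsHallSigmaSubgroup σ i H)

/-- Two subgroups permute: `AB = BA` as subsets. -/
def PermutesWith {G : Type*} [Group G] (A B : Subgroup G) : Prop :=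
  (A : Set G) * (B : Set G) = (B : Set G) * (A : Set G)

/-- `H` is `σ`-quasinormal (`σ`-permutable) in `G`: `G` possesses a complete Hall `σ`-set `𝓗`
with `H Aˣ = Aˣ H` for all `A ∈ 𝓗` and all `x ∈ G`. -/
def SigmaQuasinormal (σ : ι → Set ℕ) {G : Type*} [Group G] (H : Subgroup G) : Prop :=
  ∃ 𝓗 : Set (Subgroup G), IsCompleteHallSigmaSet σ 𝓗 ∧
    ∀ A ∈ 𝓗, ∀ x : G, PermutesWith H (A.map (MulAut.conj x).toMonoidHom)

/-- `m_{σq}(G) = n`: every `n`-maximal subgroup of `G` is `σ`-quasinormal in `G`, but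
(when `n > 1`) some `(n-1)`-maximal subgroup is not `σ`-quasinormal in `G`. -/
def mSigmaQEq (σ : ι → Set ℕ) (G : Type*) [Group G] (n : ℕ) : Prop :=
  (∀ H : Subgroup G, IsNMaximal n H → SigmaQuasinormal σ H) ∧
    (1 < n → ∃ H : Subgroup G, IsNMaximal (n - 1) H ∧ ¬ SigmaQuasinormal σ H)

/-- The rank of the (soluble) group `G` is at most `m`: every chief factor of order `p ^ k`
has `k ≤ m`. -/
def RankLE (G : Type*) [Group G] (m : ℕ) : Prop :=
  ∀ K H : Subgroup G, IsChiefFactor G K H →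
    ∀ p k : ℕ, Nat.Prime p → K.relIndex H = p ^ k → k ≤ m

/-- `H` is S-quasinormal (S-permutable) in `G`: `H` permutes with every Sylow subgroup. -/
def SQuasinormal {G : Type*} [Group G] (H : Subgroup G) : Prop :=
  ∀ p : ℕ, Nat.Prime p → ∀ P : Sylow p G, PermutesWith H (P : Subgroup G)

/-- `A` is subnormal in `G`. -/
def IsSubnormalIn {G : Type*} [Group G] (A : Subgroup G) : Prop :=
  ∃ (t : ℕ) (f : Fin (t + 1) → Subgroup G),
    f 0 = A ∧ f (Fin.last t) = ⊤ ∧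
      ∀ j : Fin t, f j.castSucc ≤ f j.succ ∧ ((f j.castSucc).subgroupOf (f j.succ)).Normal

/-- A Schmidt group: not nilpotent, but all proper subgroups are nilpotent. -/
def IsSchmidt (G : Type*) [Group G] : Prop :=
  ¬ Group.IsNilpotent G ∧ ∀ H : Subgroup G, H ≠ ⊤ → Group.IsNilpotent ↥H

/-- A finite group is supersoluble if every chief factor has prime order. -/
def IsSupersoluble (G : Type*) [Group G] : Prop :=
  ∀ K H : Subgroup G, IsChiefFactor G K H → Nat.Prime (K.relIndex H)

/-- `l_σ(G) ≤ n`: `G` has a normal series of length `n` with `σ`-nilpotent factors. -/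
def SigmaNilpotentLengthLE (σ : ι → Set ℕ) (G : Type*) [Group G] (n : ℕ) : Prop :=
  ∃ f : Fin (n + 1) → Subgroup G,
    Monotone f ∧ f 0 = ⊥ ∧ f (Fin.last n) = ⊤ ∧ (∀ j, (f j).Normal) ∧
      ∀ (j : Fin n), ∀ [inst : (f j.castSucc).Normal],
        SigmaNilpotent σ ↥((f j.succ).map (QuotientGroup.mk' (f j.castSucc)))

/-- The `σ`-Fitting subgroup of `G`: the product (join) of all normal `σ`-nilpotent
subgroups of `G`. -/
def sigmaFitting (σ : ι → Set ℕ) (G : Type*) [Group G] : Subgroup G :=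
  ⨆ N ∈ {N : Subgroup G | N.Normal ∧ SigmaNilpotent σ ↥N}, N

/-- `F` is the `n`-th term `F_{nσ}(G)` of the upper `σ`-nilpotent series of `G`:
`F_{0σ}(G) = 1` and `F_{nσ}(G)/F_{(n-1)σ}(G) = F_σ(G/F_{(n-1)σ}(G))`. -/
def IsUpperSigmaNilpotentSeriesTerm (σ : ι → Set ℕ) (G : Type*) [Group G] :
    ℕ → Subgroup G → Prop
  | 0, F => F = ⊥
  | n + 1, F => ∃ F' : Subgroup G, IsUpperSigmaNilpotentSeriesTerm σ G n F' ∧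
      ∀ [inst : F'.Normal],
        F = Subgroup.comap (QuotientGroup.mk' F') (sigmaFitting σ (G ⧸ F'))

/-- `O_π(G)`: the largest normal subgroup of `G` whose order is a `π`-number
(here realised as the join of all normal `π`-subgroups). -/
def OPi (π : Set ℕ) (G : Type*) [Group G] : Subgroup G :=
  ⨆ N ∈ {N : Subgroup G | N.Normal ∧ ∀ p : ℕ, Nat.Prime p → p ∣ Nat.card ↥N → p ∈ π}, N

/-- `G` is `π`-closed: `O_π(G)` is a Hall `π`-subgroup of `G`, i.e. no prime in `π`
divides its index. -/
def PiClosed (π : Set ℕ) (G : Type*) [Group G] : Prop :=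
  ∀ p : ℕ, Nat.Prime p → p ∣ (OPi π G).index → p ∉ π

/-- The set of primes belonging to the classes of `σ` indexed by `S` (i.e. `∪ Π`). -/
def PiPrimes (σ : ι → Set ℕ) (S : Set ι) : Set ℕ := ⋃ i ∈ S, σ i

/-- `n` and `m` are `σ`-coprime: `σ(n) ∩ σ(m) = ∅`. -/
def SigmaCoprime (σ : ι → Set ℕ) (n m : ℕ) : Prop :=
  ∀ i : ι, ∀ p q : ℕ, Nat.Prime p → Nat.Prime q → p ∣ n → q ∣ m →
    p ∈ σ i → q ∈ σ i → False

/-- `D` is the `σ`-nilpotent residual `G^{𝔑_σ}` of `G`: the smallest normal subgroup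
with `σ`-nilpotent quotient. -/
def IsSigmaNilpotentResidual (σ : ι → Set ℕ) {G : Type*} [Group G] (D : Subgroup G) : Prop :=
  D.Normal ∧
    (∀ [inst : D.Normal], SigmaNilpotent σ (G ⧸ D)) ∧
    (∀ (N : Subgroup G) [inst : N.Normal], SigmaNilpotent σ (G ⧸ N) → D ≤ N)

/-- The chief factor `H/K` is `σ`-central in `G`: the semidirect product
`(H/K) ⋊ (G/C_G(H/K))` is `σ`-primary; since `σ`-primarity depends only on the order,
this is expressed via `|H/K| * |G/C_G(H/K)|`. -/
def SigmaCentralFactor (σ : ι → Set ℕ) {G : Type*} [Group G] (K H : Subgroup G)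
    [K.Normal] : Prop :=
  IsSigmaPrimaryNat σ
    (Nat.card ↥(H.map (QuotientGroup.mk' K)) *
      (Subgroup.centralizer ((H.map (QuotientGroup.mk' K) : Subgroup (G ⧸ K)) : Set (G ⧸ K))).index)

/-- `σ(G)`: the set of classes of `σ` meeting `π(G)`. -/
def sigmaOf (σ : ι → Set ℕ) (G : Type*) [Group G] : Set ι :=
  {i : ι | (σ i ∩ {p : ℕ | Nat.Prime p ∧ p ∣ Nat.card G}).Nonempty}

end SigmaDefs

/-!
Take a maximal normal subgroup `K`. By `σ`-solubility `|G : K|` is a `σ_j`-number for some `j`;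
since `K` is `σ`-nilpotent, its `σ_j'`-part `H` is a normal Hall `σ_j'`-subgroup of `G`, with a
Schur–Zassenhaus complement `Q`. If `Q` centralised `H`, then `G = H × Q` would be `σ`-nilpotent.
In a `σ`-nilpotent group `σ_j'`-elements commute with `σ_j`-elements, so `Q₀` centralises `H₀`
whenever `H₀ ≤ H`, `Q₀ ≤ Q` and `H₀ Q₀` is a proper subgroup. Applied to `H` and the Sylow
subgroups of `Q`, this forces `Q` to be a `q`-group; applied to the `Q`-invariant Sylow subgroups
of `H` and `Q`, it forces `H` to be a `p`-group. Hence `|G| = p^a q^b` with `p`, `q` in different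
classes of `σ`, every proper subgroup is a `σ`-nilpotent, hence nilpotent, `{p, q}`-group, and
`G` is not nilpotent because its Sylow subgroups `H` and `Q` do not commute.
-/

open Subgroup

def IsPiNumber (π : Set ℕ) (n : ℕ) : Prop :=
  ∀ p : ℕ, p.Prime → p ∣ n → p ∈ π

namespace IsPiNumber

variable {π π' : Set ℕ} {m n : ℕ}

theorem of_dvd (h : IsPiNumber π n) (hmn : m ∣ n) : IsPiNumber π m :=
  fun p hp hpm => h p hp (hpm.trans hmn)

theorem mono (h : IsPiNumber π n) (hππ' : π ⊆ π') : IsPiNumber π' n :=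
  fun p hp hpn => hππ' (h p hp hpn)

theorem mul (hm : IsPiNumber π m) (hn : IsPiNumber π n) : IsPiNumber π (m * n) :=
  fun p hp hpmn => (hp.dvd_mul.mp hpmn).elim (hm p hp) (hn p hp)

theorem coprime (hm : IsPiNumber πᶜ m) (hn : IsPiNumber π n) : m.Coprime n :=
  Nat.coprime_of_dvd fun p hp hpm hpn => hm p hp hpm (hn p hp hpn)

end IsPiNumber

theorem IsPGroup.isPiNumber {p : ℕ} [Fact p.Prime] {K : Type*} [Group K] [Finite K]
    (hK : IsPGroup p K) : IsPiNumber {p} (Nat.card K) := by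
  obtain ⟨n, hn⟩ := IsPGroup.iff_card.mp hK
  rw [hn]
  exact fun r hr hrp => (Nat.prime_dvd_prime_iff_eq hr Fact.out).mp (hr.dvd_of_dvd_pow hrp)

theorem IsPiNumber.isPGroup {p : ℕ} {K : Type*} [Group K] [Finite K]
    (hK : IsPiNumber {p} (Nat.card K)) : IsPGroup p K :=
  IsPGroup.of_card (Nat.eq_prime_pow_of_unique_prime_dvd Nat.card_pos.ne' fun hr hrK => hK _ hr hrK)

namespace Subgroup

variable {G : Type*} [Group G]

theorem card_sup_dvd_of_normal_left {A B : Subgroup G} [A.Normal] :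
    Nat.card ↥(A ⊔ B) ∣ Nat.card A * Nat.card B := by
  have h := relIndex_mul_relIndex ⊥ A (A ⊔ B) bot_le le_sup_left
  rw [relIndex_bot_left, relIndex_bot_left, relIndex_sup_left] at h
  exact h ▸ mul_dvd_mul_left _ (relIndex_dvd_card A B)

theorem normal_and_isPiNumber_finset_sup {π : Set ℕ} {η : Type*} {N : η → Subgroup G} (s : Finset η)
    (hN : ∀ t ∈ s, (N t).Normal ∧ IsPiNumber π (Nat.card (N t))) :
    (s.sup N).Normal ∧ IsPiNumber π (Nat.card ↥(s.sup N)) := by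
  refine Finset.sup_induction (p := fun K : Subgroup G => K.Normal ∧ IsPiNumber π (Nat.card K))
    ⟨inferInstance, fun p hp hp1 => by
      rw [card_bot, Nat.dvd_one] at hp1
      exact absurd hp1 hp.ne_one⟩ ?_ hN
  rintro A ⟨hA, hAπ⟩ B ⟨hB, hBπ⟩
  exact ⟨inferInstance, (hAπ.mul hBπ).of_dvd card_sup_dvd_of_normal_left⟩

theorem index_dvd_card_of_sup_eq_top {A B : Subgroup G} [A.Normal] (h : A ⊔ B = ⊤) :
    A.index ∣ Nat.card B := by
  rw [← relIndex_top_right, ← h, relIndex_sup_left]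
  exact relIndex_dvd_card A B

theorem le_centralizer_of_disjoint {A B : Subgroup G} [A.Normal] [B.Normal] (hAB : Disjoint A B) :
    B ≤ centralizer A :=
  fun b hb => mem_centralizer_iff.mpr fun a ha =>
    commute_of_normal_of_disjoint A B ‹_› ‹_› hAB a b ha hb

theorem le_centralizer_of_coprime {A B : Subgroup G} [A.Normal] [B.Normal]
    (hAB : (Nat.card A).Coprime (Nat.card B)) : B ≤ centralizer A :=
  le_centralizer_of_disjoint (disjoint_of_coprime_natCard hAB)

theorem mem_of_mem_sup_of_coprime {A B : Subgroup G} (hAB : B ≤ centralizer A) {x : G}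
    (hx : x ∈ A ⊔ B) (hcop : (orderOf x).Coprime (Nat.card B)) : x ∈ A := by
  rw [← SetLike.mem_coe, coe_mul_of_right_le_normalizer_left A B
    (hAB.trans (centralizer_le_normalizer _))] at hx
  obtain ⟨a, ha, b, hb, rfl⟩ := hx
  have hab : Commute a b := (mem_centralizer_iff.mp (hAB hb) a ha)
  have hbn : b ^ orderOf (a * b) ∈ A := by
    have h1 : a ^ orderOf (a * b) * b ^ orderOf (a * b) = 1 := by
      rw [← hab.mul_pow, pow_orderOf_eq_one]
    rw [eq_inv_of_mul_eq_one_right h1]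
    exact inv_mem (pow_mem ha _)
  obtain ⟨m, hm⟩ :=
    exists_pow_eq_self_of_coprime (hcop.coprime_dvd_right (B.orderOf_dvd_natCard hb))
  exact mul_mem ha (hm ▸ pow_mem hbn m)

theorem normal_map_subtype_of_sup_eq_top {A B : Subgroup G} (hAB : B ≤ centralizer A)
    (hsup : A ⊔ B = ⊤) (N : Subgroup A) [N.Normal] : (N.map A.subtype).Normal := by
  rw [← normalizer_eq_top_iff, eq_top_iff, ← hsup, sup_le_iff]
  constructor
  · simpa [normalizer_eq_top, ← MonoidHom.range_eq_map] using le_normalizer_map (H := N) A.subtype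
  · exact hAB.trans ((centralizer_le (map_subtype_le N)).trans (centralizer_le_normalizer _))

theorem disjoint_sup_of_coprime {A B N M : Subgroup G} (hAB : B ≤ centralizer A)
    (hcop : (Nat.card A).Coprime (Nat.card B)) (hN : N ≤ A) (hM : M ≤ A) (hNM : Disjoint N M) :
    Disjoint N (M ⊔ B) := by
  rw [disjoint_def]
  intro x hxN hxMB
  have hxM : x ∈ M := mem_of_mem_sup_of_coprime (hAB.trans (centralizer_le hM)) hxMB
    (hcop.coprime_dvd_left (A.orderOf_dvd_natCard (hN hxN)))
  exact disjoint_def.mp hNM hxN hxM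

theorem iSup_map_subtype_eq {C : Subgroup G} {η : Type*} {L : η → Subgroup C}
    (hL : ⨆ t, L t = ⊤) : ⨆ t, (L t).map C.subtype = C := by
  rw [← Subgroup.map_iSup, hL, ← MonoidHom.range_eq_map, range_subtype]

theorem _root_.iSupIndep.disjoint_map_subtype_sup {C D : Subgroup G} {η : Type*}
    {L : η → Subgroup C} (hL : iSupIndep L) (hCD : D ≤ centralizer C)
    (hcop : (Nat.card C).Coprime (Nat.card D)) (t : η) :
    Disjoint ((L t).map C.subtype) ((⨆ (s) (_ : s ≠ t), (L s).map C.subtype) ⊔ D) := by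
  refine disjoint_sup_of_coprime hCD hcop (map_subtype_le _)
    (iSup₂_le fun s _ => map_subtype_le _) ?_
  simpa only [Subgroup.map_iSup] using disjoint_map (subtype_injective _) (hL t)

theorem card_sup_le_of_le_normalizer {H N : Subgroup G} (hN : N ≤ normalizer H) :
    Nat.card ↥(H ⊔ N) ≤ Nat.card H * Nat.card N := by
  have h := Set.natCard_mul_le (s := (H : Set G)) (t := N)
  rwa [← coe_mul_of_right_le_normalizer_left H N hN] at h

theorem eq_top_of_forall_sylow_le [Finite G] {C : Subgroup G}
    (h : ∀ (s : ℕ) [Fact s.Prime], ∃ P : Sylow s G, (P : Subgroup G) ≤ C) : C = ⊤ := by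
  rw [← index_eq_one, Nat.eq_one_iff_not_exists_prime_dvd]
  intro s hs hsC
  have := Fact.mk hs
  obtain ⟨P, hP⟩ := h s
  exact P.not_dvd_index (hsC.trans (index_dvd_of_le hP))

end Subgroup

theorem Group.isNilpotent_of_sup_eq_top {G : Type*} [Group G] {A B : Subgroup G}
    [Group.IsNilpotent A] [Group.IsNilpotent B] (hAB : B ≤ centralizer A) (hsup : A ⊔ B = ⊤) :
    Group.IsNilpotent G := by
  have hcomm (a : A) (b : B) : Commute (A.subtype a) (B.subtype b) :=
    mem_centralizer_iff.mp (hAB b.2) a a.2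
  refine Group.nilpotent_of_surjective (A.subtype.noncommCoprod B.subtype hcomm) ?_
  rw [← MonoidHom.range_eq_top, MonoidHom.noncommCoprod_range, range_subtype, range_subtype, hsup]

theorem iSupIndep_sum_elim {α η κ : Type*} [CompleteLattice α] {f : η → α} {g : κ → α}
    (hf : ∀ t, Disjoint (f t) ((⨆ (s) (_ : s ≠ t), f s) ⊔ ⨆ s, g s))
    (hg : ∀ t, Disjoint (g t) ((⨆ (s) (_ : s ≠ t), g s) ⊔ ⨆ s, f s)) :
    iSupIndep (Sum.elim f g) := by
  rintro (t | t)
  · refine (hf t).mono_right ?_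
    simp only [iSup_sum, Sum.elim_inl, Sum.elim_inr, ne_eq, Sum.inl.injEq]
    exact sup_le_sup le_rfl (iSup_mono fun s => iSup_le fun _ => le_rfl)
  · refine (hg t).mono_right ?_
    simp only [iSup_sum, Sum.elim_inl, Sum.elim_inr, ne_eq, Sum.inr.injEq]
    rw [sup_comm]
    exact sup_le_sup le_rfl (iSup_mono fun s => iSup_le fun _ => le_rfl)

theorem Group.IsNilpotent.le_centralizer_of_isPGroup {G : Type*} [Group G] [Finite G]
    [Group.IsNilpotent G] {p q : ℕ} [Fact p.Prime] [Fact q.Prime] (hpq : p ≠ q)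
    {A B : Subgroup G} (hA : IsPGroup p A) (hB : IsPGroup q B) : B ≤ centralizer A := by
  obtain ⟨P, hAP⟩ := hA.exists_le_sylow
  obtain ⟨Q, hBQ⟩ := hB.exists_le_sylow
  have hPQ := IsPGroup.disjoint_of_ne p q hpq _ _ P.isPGroup' Q.isPGroup'
  exact hBQ.trans ((le_centralizer_of_disjoint hPQ).trans (centralizer_le hAP))

namespace SigmaNilpotent

variable {ι : Type*} {σ : ι → Set ℕ} {G : Type*} [Group G]

theorem of_iSupIndep {η : Type*} [Finite η] {N : η → Subgroup G} (hn : ∀ t, (N t).Normal)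
    (hp : ∀ t, IsSigmaPrimary σ (N t)) (hind : iSupIndep N) (htop : ⨆ t, N t = ⊤) :
    SigmaNilpotent σ G := by
  obtain ⟨k, ⟨e⟩⟩ := Finite.exists_equiv_fin η
  refine ⟨k, N ∘ e.symm, fun t => hn _, fun t => hp _, hind.comp e.symm.injective, ?_⟩
  rw [← htop]
  exact e.symm.surjective.iSup_comp N

theorem of_subsingleton [Subsingleton G] : SigmaNilpotent σ G :=
  of_iSupIndep (N := (Empty.elim : Empty → Subgroup G)) (fun t => t.elim) (fun t => t.elim)
    (iSupIndep_subsingleton _) (Subsingleton.elim _ _)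

theorem of_isSigmaPrimary (h : IsSigmaPrimary σ G) : SigmaNilpotent σ G :=
  of_iSupIndep (N := fun _ : Unit => ⊤) (fun _ => inferInstance)
    (fun _ => by rwa [IsSigmaPrimary, card_top]) (iSupIndep_subsingleton _) iSup_const

theorem of_sup_eq_top {A B : Subgroup G} (hAB : B ≤ centralizer A)
    (hcop : (Nat.card A).Coprime (Nat.card B)) (hsup : A ⊔ B = ⊤)
    (hA : SigmaNilpotent σ A) (hB : SigmaNilpotent σ B) : SigmaNilpotent σ G := by
  obtain ⟨k, N, hNn, hNp, hNind, hNtop⟩ := hA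
  obtain ⟨l, M, hMn, hMp, hMind, hMtop⟩ := hB
  have hBA : A ≤ centralizer B := le_centralizer_iff.mp hAB
  have hsup' : B ⊔ A = ⊤ := sup_comm A B ▸ hsup
  refine of_iSupIndep (N := Sum.elim (fun t => (N t).map A.subtype) fun t => (M t).map B.subtype)
    ?_ ?_ ?_ ?_
  · rintro (t | t)
    exacts [normal_map_subtype_of_sup_eq_top hAB hsup _,
      normal_map_subtype_of_sup_eq_top hBA hsup' _]
  · rintro (t | t)
    · rw [Sum.elim_inl, IsSigmaPrimary, card_map_of_injective A.subtype_injective]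
      exact hNp t
    · rw [Sum.elim_inr, IsSigmaPrimary, card_map_of_injective B.subtype_injective]
      exact hMp t
  · refine iSupIndep_sum_elim (fun t => ?_) (fun t => ?_)
    · rw [iSup_map_subtype_eq hMtop]; exact iSupIndep.disjoint_map_subtype_sup hNind hAB hcop t
    · rw [iSup_map_subtype_eq hNtop]; exact iSupIndep.disjoint_map_subtype_sup hMind hBA hcop.symm t
  · rw [iSup_sum]
    simp only [Sum.elim_inl, Sum.elim_inr]
    rw [iSup_map_subtype_eq hNtop, iSup_map_subtype_eq hMtop, hsup]

theorem exists_sup_eq_top (hσ : IsPrimePartition σ) (hG : SigmaNilpotent σ G) (j : ι) :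
    ∃ A B : Subgroup G, A.Normal ∧ B.Normal ∧ A ⊔ B = ⊤ ∧
      IsPiNumber (σ j)ᶜ (Nat.card A) ∧ IsPiNumber (σ j) (Nat.card B) := by
  classical
  obtain ⟨k, N, hNn, hNp, -, hNtop⟩ := hG
  set s := Finset.univ.filter fun t => IsPiNumber (σ j) (Nat.card (N t))
  obtain ⟨hA, hAj⟩ := normal_and_isPiNumber_finset_sup (π := (σ j)ᶜ) sᶜ fun t ht => by
    refine ⟨hNn t, ?_⟩
    obtain ⟨i, hi⟩ := hNp t
    have hij : i ≠ j := by
      rintro rfl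
      simp only [s, Finset.mem_compl, Finset.mem_filter, Finset.mem_univ, true_and] at ht
      exact ht hi
    exact IsPiNumber.mono hi (hσ.2.2.1 i j hij).subset_compl_right
  obtain ⟨hB, hBj⟩ := normal_and_isPiNumber_finset_sup (π := σ j) s fun t ht => by
    simp only [s, Finset.mem_filter] at ht
    exact ⟨hNn t, ht.2⟩
  refine ⟨sᶜ.sup N, s.sup N, hA, hB, ?_, hAj, hBj⟩
  rw [sup_comm, ← Finset.sup_union, Finset.union_compl, Finset.sup_univ_eq_iSup, hNtop]

theorem commute (hσ : IsPrimePartition σ) (hG : SigmaNilpotent σ G) {j : ι} {x y : G}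
    (hx : IsPiNumber (σ j)ᶜ (orderOf x)) (hy : IsPiNumber (σ j) (orderOf y)) : Commute x y := by
  obtain ⟨A, B, hA, hB, hsup, hAj, hBj⟩ := hG.exists_sup_eq_top hσ j
  have hAB : B ≤ centralizer A := le_centralizer_of_coprime (hAj.coprime hBj)
  have hxA : x ∈ A := mem_of_mem_sup_of_coprime hAB (hsup ▸ mem_top x) (hx.coprime hBj)
  have hyB : y ∈ B := mem_of_mem_sup_of_coprime (le_centralizer_iff.mp hAB)
    (sup_comm A B ▸ hsup ▸ mem_top y) (hAj.coprime hy).symm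
  exact mem_centralizer_iff.mp (hAB hyB) x hxA

theorem isNilpotent_of_isPiNumber_pair (hσ : IsPrimePartition σ) [Finite G]
    (hG : SigmaNilpotent σ G) {j : ι} {p q : ℕ} [Fact p.Prime] [Fact q.Prime] (hp : p ∉ σ j)
    (hq : q ∈ σ j) (hpq : IsPiNumber {p, q} (Nat.card G)) : Group.IsNilpotent G := by
  obtain ⟨A, B, hA, hB, hsup, hAj, hBj⟩ := hG.exists_sup_eq_top hσ j
  have hAp : IsPGroup p A := IsPiNumber.isPGroup fun r hr hrA =>
    (hpq r hr (hrA.trans A.card_subgroup_dvd_card)).resolve_right fun h => hAj r hr hrA (h ▸ hq)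
  have hBq : IsPGroup q B := IsPiNumber.isPGroup fun r hr hrB =>
    (hpq r hr (hrB.trans B.card_subgroup_dvd_card)).resolve_left fun h => hp (h ▸ hBj r hr hrB)
  have := hAp.isNilpotent
  have := hBq.isNilpotent
  exact Group.isNilpotent_of_sup_eq_top (le_centralizer_of_coprime (hAj.coprime hBj)) hsup

end SigmaNilpotent

theorem exists_isChiefFactor_top (G : Type*) [Group G] [Finite G] [Nontrivial G] :
    ∃ K : Subgroup G, IsChiefFactor G K ⊤ := by
  obtain ⟨K, ⟨hKn, hKtop⟩, hK⟩ := (Set.toFinite {K : Subgroup G | K.Normal ∧ K ≠ ⊤}).exists_maximal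
    ⟨⊥, inferInstance, bot_ne_top⟩
  refine ⟨K, hKn, inferInstance, hKtop.lt_top, fun L hL hKL _ => ?_⟩
  by_cases hLtop : L = ⊤
  · exact Or.inr hLtop
  · exact Or.inl (le_antisymm (hK ⟨hL, hLtop⟩ hKL) hKL)

theorem Sylow.card_lt_of_not_isPGroup {K : Type*} [Group K] [Finite K] {s : ℕ} [Fact s.Prime]
    (P : Sylow s K) (hK : ¬ IsPGroup s K) : Nat.card P < Nat.card K :=
  (Nat.le_of_dvd Nat.card_pos (card_subgroup_dvd_card _)).lt_of_ne fun h =>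
    hK (IsPGroup.of_card (h.symm.trans P.card_eq_multiplicity))

/-- `Q` permutes the Sylow `s`-subgroups of `H`, whose number divides `|H|` and so is prime to
`q`; hence the `q`-group `Q` fixes one of them. -/
theorem exists_sylow_le_normalizer {G : Type*} [Group G] [Finite G] {H Q : Subgroup G} [H.Normal]
    {q : ℕ} [Fact q.Prime] (hQ : IsPGroup q Q) (hqH : ¬ q ∣ Nat.card H) (s : ℕ) [Fact s.Prime] :
    ∃ P : Sylow s H, Q ≤ normalizer ((P : Subgroup H).map H.subtype) := by
  let _ : MulDistribMulAction Q H :=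
    MulDistribMulAction.compHom _ ((MulAut.conjNormal (H := H)).comp Q.subtype)
  have hq : ¬ q ∣ Nat.card (Sylow s H) := fun h => by
    obtain ⟨P₀⟩ : Nonempty (Sylow s H) := inferInstance
    exact hqH (h.trans ((Sylow.card_dvd_index P₀).trans (index_dvd_card _)))
  obtain ⟨P, hP⟩ := hQ.nonempty_fixed_point_of_prime_not_dvd_card (Sylow s H) hq
  refine ⟨P, fun u hu => mem_normalizer_fintype ?_⟩
  rintro _ ⟨x, hx, rfl⟩
  have hux : (⟨u, hu⟩ : Q) • x ∈ (⟨u, hu⟩ : Q) • (P : Subgroup H) :=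
    smul_mem_pointwise_smul x _ _ hx
  rw [← Sylow.pointwise_smul_def, hP ⟨u, hu⟩] at hux
  exact ⟨_, hux, MulAut.conjNormal_apply u x⟩

section MinimalNonSigmaNilpotent

variable {ι : Type*} {σ : ι → Set ℕ} {G : Type*} [Group G]

theorem exists_normal_hall_of_sigmaNilpotent (hσ : IsPrimePartition σ) {K : Subgroup G} [K.Normal]
    (hK : SigmaNilpotent σ K) {j : ι} (hj : IsPiNumber (σ j) K.index) :
    ∃ H : Subgroup G, H ≤ K ∧ H.Normal ∧ IsPiNumber (σ j)ᶜ (Nat.card H) ∧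
      IsPiNumber (σ j) H.index := by
  obtain ⟨A, B, hA, hB, hsup, hAj, hBj⟩ := hK.exists_sup_eq_top hσ j
  have hAB : B ≤ centralizer A := le_centralizer_of_coprime (hAj.coprime hBj)
  refine ⟨A.map K.subtype, map_subtype_le A, ⟨?_⟩, ?_, ?_⟩
  · -- the elements of `A` are exactly the `σ_j'`-elements of `K`, and conjugation preserves orders
    rintro _ ⟨y, hyA, rfl⟩ g
    have hgy : g * y * g⁻¹ ∈ K := Normal.conj_mem ‹_› (y : G) y.2 g
    refine ⟨⟨_, hgy⟩, mem_of_mem_sup_of_coprime hAB (hsup ▸ mem_top _) ?_, rfl⟩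
    rw [orderOf_mk, ← MulAut.conj_apply, MulEquiv.orderOf_eq, orderOf_coe]
    exact (hAj.of_dvd (A.orderOf_dvd_natCard hyA)).coprime hBj
  · rwa [card_map_of_injective K.subtype_injective]
  · rw [← relIndex_mul_index (map_subtype_le A)]
    refine IsPiNumber.mul (hBj.of_dvd ?_) hj
    rw [relIndex, subgroupOf, comap_map_eq_self_of_injective K.subtype_injective]
    exact index_dvd_card_of_sup_eq_top hsup

variable {H Q : Subgroup G} {j : ι}

theorem le_centralizer_of_card_mul_lt (hσ : IsPrimePartition σ)
    (hall : ∀ X : Subgroup G, X ≠ ⊤ → SigmaNilpotent σ X) (hH : IsPiNumber (σ j)ᶜ (Nat.card H))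
    (hQ : IsPiNumber (σ j) (Nat.card Q)) (hQH : Q ≤ normalizer H)
    (hlt : Nat.card H * Nat.card Q < Nat.card G) :
    Q ≤ centralizer H := by
  have hX : H ⊔ Q ≠ ⊤ := fun h => (card_sup_le_of_le_normalizer hQH).not_gt (by rwa [h, card_top])
  intro y hy
  rw [mem_centralizer_iff]
  intro x hx
  have hxy := (hall _ hX).commute hσ (x := ⟨x, mem_sup_left hx⟩) (y := ⟨y, mem_sup_right hy⟩)
    (by rw [orderOf_mk]; exact hH.of_dvd (H.orderOf_dvd_natCard hx))
    (by rw [orderOf_mk]; exact hQ.of_dvd (Q.orderOf_dvd_natCard hy))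
  exact congrArg Subtype.val hxy.eq

theorem sigmaNilpotent_of_le_centralizer
    (hall : ∀ X : Subgroup G, X ≠ ⊤ → SigmaNilpotent σ X) (hsup : H ⊔ Q = ⊤)
    (hH : IsPiNumber (σ j)ᶜ (Nat.card H)) (hQ : IsPiNumber (σ j) (Nat.card Q)) (hHtop : H ≠ ⊤)
    (hQH : Q ≤ centralizer H) : SigmaNilpotent σ G := by
  by_cases hQtop : Q = ⊤
  · refine .of_isSigmaPrimary ⟨j, ?_⟩
    rwa [← card_top (G := G), ← hQtop]
  · exact .of_sup_eq_top hQH (hH.coprime hQ) hsup (hall H hHtop) (hall Q hQtop)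

theorem complement_le_centralizer_of_forall_not_isPGroup [Finite G] (hσ : IsPrimePartition σ)
    (hall : ∀ X : Subgroup G, X ≠ ⊤ → SigmaNilpotent σ X) [H.Normal] (hHQ : H.IsComplement' Q)
    (hH : IsPiNumber (σ j)ᶜ (Nat.card H)) (hQ : IsPiNumber (σ j) (Nat.card Q))
    (hQp : ∀ q, q.Prime → ¬ IsPGroup q Q) : Q ≤ centralizer H := by
  refine subgroupOf_eq_top.mp (eq_top_of_forall_sylow_le fun s _ => ?_)
  obtain ⟨P⟩ : Nonempty (Sylow s Q) := inferInstance
  refine ⟨P, map_le_iff_le_comap.mp ?_⟩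
  refine le_centralizer_of_card_mul_lt hσ hall hH ?_ le_normalizer_of_normal ?_
  · rw [card_map_of_injective Q.subtype_injective]
    exact hQ.of_dvd (card_subgroup_dvd_card _)
  · rw [card_map_of_injective Q.subtype_injective, ← hHQ.card_mul_card]
    exact Nat.mul_lt_mul_of_pos_left (P.card_lt_of_not_isPGroup (hQp s Fact.out)) Nat.card_pos

theorem normal_le_centralizer_of_forall_not_isPGroup [Finite G] (hσ : IsPrimePartition σ)
    (hall : ∀ X : Subgroup G, X ≠ ⊤ → SigmaNilpotent σ X) [H.Normal] (hHQ : H.IsComplement' Q)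
    (hH : IsPiNumber (σ j)ᶜ (Nat.card H)) (hQ : IsPiNumber (σ j) (Nat.card Q)) {q : ℕ}
    [Fact q.Prime] (hQq : IsPGroup q Q) (hqH : ¬ q ∣ Nat.card H)
    (hHp : ∀ p, p.Prime → ¬ IsPGroup p H) : H ≤ centralizer Q := by
  refine subgroupOf_eq_top.mp (eq_top_of_forall_sylow_le fun s _ => ?_)
  obtain ⟨P, hP⟩ := exists_sylow_le_normalizer hQq hqH s
  refine ⟨P, map_le_iff_le_comap.mp (le_centralizer_iff.mp ?_)⟩
  refine le_centralizer_of_card_mul_lt hσ hall ?_ hQ hP ?_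
  · rw [card_map_of_injective H.subtype_injective]
    exact hH.of_dvd (card_subgroup_dvd_card _)
  · rw [card_map_of_injective H.subtype_injective, ← hHQ.card_mul_card]
    exact Nat.mul_lt_mul_of_pos_right (P.card_lt_of_not_isPGroup (hHp s Fact.out)) Nat.card_pos

theorem exists_isPGroup_of_not_le_centralizer [Finite G] (hσ : IsPrimePartition σ)
    (hall : ∀ X : Subgroup G, X ≠ ⊤ → SigmaNilpotent σ X) [H.Normal] (hHQ : H.IsComplement' Q)
    (hH : IsPiNumber (σ j)ᶜ (Nat.card H)) (hQ : IsPiNumber (σ j) (Nat.card Q))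
    (hQH : ¬ Q ≤ centralizer H) :
    ∃ p q : ℕ, p.Prime ∧ q.Prime ∧ p ∉ σ j ∧ q ∈ σ j ∧ IsPGroup p H ∧ IsPGroup q Q := by
  have hH1 : Nat.card H ≠ 1 := fun h => hQH (le_centralizer_iff.mpr (card_eq_one.mp h ▸ bot_le))
  have hQ1 : Nat.card Q ≠ 1 := fun h => hQH (card_eq_one.mp h ▸ bot_le)
  obtain ⟨q, hq, hQq⟩ : ∃ q, q.Prime ∧ IsPGroup q Q := by
    by_contra! hQp
    exact hQH (complement_le_centralizer_of_forall_not_isPGroup hσ hall hHQ hH hQ hQp)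
  have := Fact.mk hq
  have hqj : q ∈ σ j := hQ q hq (hQq.card_eq_or_dvd.resolve_left hQ1)
  obtain ⟨p, hp, hHp⟩ : ∃ p, p.Prime ∧ IsPGroup p H := by
    by_contra! hHp
    exact hQH (le_centralizer_iff.mp (normal_le_centralizer_of_forall_not_isPGroup hσ hall hHQ
      hH hQ hQq (fun hqH => hH q hq hqH hqj) hHp))
  have := Fact.mk hp
  exact ⟨p, q, hp, hq, hH p hp (hHp.card_eq_or_dvd.resolve_left hH1), hqj, hHp, hQq⟩

end MinimalNonSigmaNilpotent

theorem ncard_sigmaOf_eq_card_primeFactors {ι : Type*} {σ : ι → Set ℕ} (hσ : IsPrimePartition σ)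
    (G : Type*) [Group G] [Finite G]
    (h : ∀ i, (σ i ∩ {p : ℕ | p.Prime ∧ p ∣ Nat.card G}).Subsingleton) :
    (sigmaOf σ G).ncard = (Nat.card G).primeFactors.card := by
  rw [← Set.ncard_coe_finset]
  refine Set.ncard_congr (fun i hi => hi.some) (fun i hi => ?_) (fun i i' hi hi' hii' => ?_)
    (fun p hp => ?_)
  · obtain ⟨-, hp, hpG⟩ := hi.some_mem
    exact Nat.mem_primeFactors.mpr ⟨hp, hpG, Nat.card_pos.ne'⟩
  · by_contra hne
    exact Set.disjoint_left.mp (hσ.2.2.1 i i' hne) hi.some_mem.1 (hii' ▸ hi'.some_mem.1)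
  · obtain ⟨hp, hpG, -⟩ := Nat.mem_primeFactors.mp hp
    obtain ⟨i, hpi⟩ := hσ.2.2.2 p hp
    have hi : i ∈ sigmaOf σ G := ⟨p, hpi, hp, hpG⟩
    exact ⟨i, hi, h i hi.some_mem ⟨hpi, hp, hpG⟩⟩

theorem subsingleton_inter_of_isPiNumber_pair {ι : Type*} {σ : ι → Set ℕ}
    (hσ : IsPrimePartition σ) {j : ι} {n p q : ℕ} (hp : p ∉ σ j) (hq : q ∈ σ j)
    (hn : IsPiNumber {p, q} n) (i : ι) : (σ i ∩ {r : ℕ | r.Prime ∧ r ∣ n}).Subsingleton := by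
  have hpq : p ∈ σ i → q ∉ σ i := fun hpi hqi => by
    obtain rfl : i = j := by_contra fun hij => Set.disjoint_left.mp (hσ.2.2.1 i j hij) hqi hq
    exact hp hpi
  rintro r ⟨hri, hr, hrn⟩ r' ⟨hr'i, hr', hr'n⟩
  have hr2 : r = p ∨ r = q := hn r hr hrn
  have hr'2 : r' = p ∨ r' = q := hn r' hr' hr'n
  rcases hr2 with rfl | rfl <;> rcases hr'2 with rfl | rfl
  exacts [rfl, absurd hr'i (hpq hri), absurd hri (hpq hr'i), rfl]

/-- If a finite `σ`-soluble group `G` is not `σ`-nilpotent but all of its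
proper subgroups are `σ`-nilpotent, then `G` is a Schmidt group with `|σ(G)| = |π(G)|`. -/
theorem schmidt_of_minimal_nonSigmaNilpotent {ι : Type*} (σ : ι → Set ℕ)
    (hσ : IsPrimePartition σ) (G : Type*) [Group G] [Finite G]
    (hsol : SigmaSoluble σ G) (hnn : ¬ SigmaNilpotent σ G)
    (hall : ∀ H : Subgroup G, H ≠ ⊤ → SigmaNilpotent σ ↥H) :
    IsSchmidt G ∧ (sigmaOf σ G).ncard = (Nat.card G).primeFactors.card := by
  have : Nontrivial G := by
    by_contra h
    have := not_nontrivial_iff_subsingleton.mp h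
    exact hnn .of_subsingleton
  obtain ⟨K, hK⟩ := exists_isChiefFactor_top G
  have := hK.1
  obtain ⟨j, hj⟩ := hsol K ⊤ hK
  rw [relIndex_top_right] at hj
  obtain ⟨H, hHK, hHn, hH, hHidx⟩ :=
    exists_normal_hall_of_sigmaNilpotent hσ (hall K hK.2.2.1.ne) hj
  obtain ⟨Q, hHQ⟩ := exists_right_complement'_of_coprime (hH.coprime hHidx)
  have hQ : IsPiNumber (σ j) (Nat.card Q) := hHQ.symm.index_eq_card ▸ hHidx
  have hQH : ¬ Q ≤ centralizer H := fun h => hnn <| sigmaNilpotent_of_le_centralizer hall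
    hHQ.sup_eq_top hH hQ (ne_top_of_le_ne_top hK.2.2.1.ne hHK) h
  obtain ⟨p, q, hp, hq, hpj, hqj, hHp, hQq⟩ :=
    exists_isPGroup_of_not_le_centralizer hσ hall hHQ hH hQ hQH
  have := Fact.mk hp
  have := Fact.mk hq
  have hpq : IsPiNumber {p, q} (Nat.card G) := hHQ.card_mul_card ▸
    (hHp.isPiNumber.mono (by simp)).mul (hQq.isPiNumber.mono (by simp))
  refine ⟨⟨fun _ => hQH ?_, fun W hW => ?_⟩, ?_⟩
  · exact Group.IsNilpotent.le_centralizer_of_isPGroup (ne_of_mem_of_not_mem hqj hpj).symm hHp hQq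
  · exact (hall W hW).isNilpotent_of_isPiNumber_pair hσ hpj hqj
      (hpq.of_dvd W.card_subgroup_dvd_card)
  · exact ncard_sigmaOf_eq_card_primeFactors hσ G
      (subsingleton_inter_of_isPiNumber_pair hσ hpj hqj hpq)
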